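/- Assume β_k^a = 2γ_{k+a}^a and λ_k^{k−a,k−a'} = λ_k^{k−a',k−a} = λ_{k−a}^{k,k−a'} for all k, a, a' ∈ ℤ_K. Then ∑_{k∈ℤ_K}∑_{j∈ℤ_M} (u_{k,j} B_{k,j}(u) − ∂_{k,j}B_{k,j}(u)) = 0, where B_{k,j} = G_{k,j} − G_{k,j−1} and G_{k,j} = α_k w_{k,j} + ∑_{l≠0} β_k^l b_{k,j}^l + ∑_{l≠0} γ_k^l r_{k,j}^l + ∑_{l≠0}∑_{l'≠0, l'≠l} λ_k^{k−l,k−l'} p_{k,j}^{l,l'}. -/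

import Mathlib

/-- The partial derivative `∂_{k,j}` in the coordinate `u_{k,j}` on `ℝ^{ℤ_K × ℤ_M}`. -/
noncomputable def pd (K M : ℕ) (k : ZMod K) (j : ZMod M)
    (f : ((ZMod K × ZMod M) → ℝ) → ℝ) (u : (ZMod K × ZMod M) → ℝ) : ℝ :=
  deriv (fun t => f (Function.update u (k, j) t)) (u (k, j))

/-- `w_{k,j} = (1/3)(u_{k,j}² + u_{k,j}u_{k,j+1} + u_{k,j+1}²)`. -/
noncomputable def wTerm (K M : ℕ) (k : ZMod K) (j : ZMod M)
    (u : (ZMod K × ZMod M) → ℝ) : ℝ :=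
  (1 / 3) * (u (k, j) ^ 2 + u (k, j) * u (k, j + 1) + u (k, j + 1) ^ 2)

/-- `b_{k,j}^l = (1/2)(u_{k,j}u_{k+l,j} + u_{k,j+1}u_{k+l,j+1})`. -/
noncomputable def bTerm (K M : ℕ) (k : ZMod K) (j : ZMod M) (l : ZMod K)
    (u : (ZMod K × ZMod M) → ℝ) : ℝ :=
  (1 / 2) * (u (k, j) * u (k + l, j) + u (k, j + 1) * u (k + l, j + 1))

/-- `r_{k,j}^l = u_{k−l,j}u_{k−l,j+1}`. -/
noncomputable def rTerm (K M : ℕ) (k : ZMod K) (j : ZMod M) (l : ZMod K)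
    (u : (ZMod K × ZMod M) → ℝ) : ℝ :=
  u (k - l, j) * u (k - l, j + 1)

/-- `p_{k,j}^{l,l'}`. -/
noncomputable def pTerm (K M : ℕ) (k : ZMod K) (j : ZMod M) (l l' : ZMod K)
    (u : (ZMod K × ZMod M) → ℝ) : ℝ :=
  (1 / 6) * (2 * u (k - l, j) * u (k - l', j) + u (k - l, j) * u (k - l', j + 1)
    + u (k - l, j + 1) * u (k - l', j) + 2 * u (k - l, j + 1) * u (k - l', j + 1))

/-- `G_{k,j} = α_k w_{k,j} + ∑_{l≠0} β_k^l b_{k,j}^l + ∑_{l≠0} γ_k^l r_{k,j}^l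
  + ∑_{l≠0}∑_{l'≠0,l'≠l} λ_k^{k−l,k−l'} p_{k,j}^{l,l'}`. -/
noncomputable def GTerm (K M : ℕ) [NeZero K] (α : ZMod K → ℝ) (β γ : ZMod K → ZMod K → ℝ)
    (lam : ZMod K → ZMod K → ZMod K → ℝ) (k : ZMod K) (j : ZMod M)
    (u : (ZMod K × ZMod M) → ℝ) : ℝ :=
  α k * wTerm K M k j u
    + ∑ l ∈ Finset.univ.erase (0 : ZMod K), β k l * bTerm K M k j l u
    + ∑ l ∈ Finset.univ.erase (0 : ZMod K), γ k l * rTerm K M k j l u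
    + ∑ l ∈ Finset.univ.erase (0 : ZMod K), ∑ l' ∈ (Finset.univ.erase (0 : ZMod K)).erase l,
        lam k (k - l) (k - l') * pTerm K M k j l l' u

/-- `B_{k,j} = G_{k,j} − G_{k,j−1}`. -/
noncomputable def BTerm (K M : ℕ) [NeZero K] (α : ZMod K → ℝ) (β γ : ZMod K → ZMod K → ℝ)
    (lam : ZMod K → ZMod K → ZMod K → ℝ) (k : ZMod K) (j : ZMod M)
    (u : (ZMod K × ZMod M) → ℝ) : ℝ :=
  GTerm K M α β γ lam k j u - GTerm K M α β γ lam k (j - 1) u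

/-! Both double sums vanish separately.

Along the line `t ↦ update u (k, j) t`, the `t²` terms of `w_{k,j}` and `w_{k,j-1}` cancel and
every other term of `B_{k,j}` is at most linear in `t`, so
`∂_{k,j}B_{k,j} = α_k (u_{k,j+1} - u_{k,j-1}) / 3`, whose sum over `j` telescopes.

Summation by parts turns `∑_j u_{k,j} B_{k,j}` into `∑_j (u_{k,j} - u_{k,j+1}) G_{k,j}`. The
`w`-part telescopes (to `u³ / 3`). Up to a telescoping term, the `b^l`-part at `k` is minus half
the `r^l`-part at `k + l`, so `β_k^l = 2 γ_{k+l}^l` makes the two cancel after the shift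
`k ↦ k + l`. In the `p`-part, indexed by the distinct triples `(a, b, c) = (k, k - l, k - l')`,
the hypotheses make `λ` fully symmetric, and the contributions of the three cyclic rotations of a
triple telescope to `u_a u_b u_c`. -/

open Finset Function

section Telescoping

variable {G R : Type*} [AddCommGroup G] [Fintype G]

theorem sum_sub_comp_add_eq_zero [AddCommGroup R] (f : G → R) (c : G) :
    ∑ j, (f j - f (j + c)) = 0 := by
  rw [sum_sub_distrib, Fintype.sum_equiv (Equiv.addRight c) (fun j => f (j + c)) f fun _ => rfl,
    sub_self]

theorem sum_eq_of_eq_add_sub_comp_add [AddCommGroup R] {f g h : G → R} (c : G)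
    (H : ∀ j, f j = g j + (h j - h (j + c))) : ∑ j, f j = ∑ j, g j := by
  rw [sum_congr rfl fun j _ => H j, sum_add_distrib, sum_sub_comp_add_eq_zero, add_zero]

theorem sum_mul_sub_comp_sub [CommRing R] (f g : G → R) (c : G) :
    ∑ j, f j * (g j - g (j - c)) = ∑ j, (f j - f (j + c)) * g j := by
  have shift : ∑ j, f j * g (j - c) = ∑ j, f (j + c) * g j :=
    (Fintype.sum_equiv (Equiv.addRight c) _ _ fun j => by simp).symm
  simp only [mul_sub, sub_mul, sum_sub_distrib, shift]

end Telescoping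

section CyclicSums

variable {ι R : Type*} [Fintype ι] [DecidableEq ι] [AddCommGroup R]

theorem sum_erase_sum_erase_eq_sum_ite (x : ι) (f : ι → ι → R) :
    ∑ a ∈ univ.erase x, ∑ b ∈ (univ.erase x).erase a, f a b
      = ∑ a, ∑ b, if a ≠ x ∧ b ≠ x ∧ b ≠ a then f a b else 0 := by
  simp only [← filter_ne', sum_filter, ite_and]
  refine sum_congr rfl fun a _ => ?_
  split_ifs <;> simp

theorem sum_sum_erase_sum_erase_eq_zero [IsAddTorsionFree R] (F : ι → ι → ι → R)
    (hF : ∀ a b c, b ≠ a → c ≠ a → c ≠ b → F a b c + F b c a + F c a b = 0) :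
    ∑ a, ∑ b ∈ univ.erase a, ∑ c ∈ (univ.erase a).erase b, F a b c = 0 := by
  set H : ι → ι → ι → R := fun a b c => if b ≠ a ∧ c ≠ a ∧ c ≠ b then F a b c else 0 with hH
  have rotate (g : ι → ι → ι → R) : ∑ a, ∑ b, ∑ c, g b c a = ∑ a, ∑ b, ∑ c, g a b c := by
    rw [sum_comm]
    exact sum_congr rfl fun _ _ => sum_comm
  have hsum : ∑ a, ∑ b, ∑ c, (H a b c + H b c a + H c a b) = 0 := by
    refine sum_eq_zero fun a _ => sum_eq_zero fun b _ => sum_eq_zero fun c _ => ?_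
    simp only [hH]
    by_cases hba : b = a <;> by_cases hca : c = a <;> by_cases hcb : c = b <;>
      simp_all [Ne.symm]
  have h3 : 3 • ∑ a, ∑ b, ∑ c, H a b c = 0 := by
    rw [← hsum]
    simp only [sum_add_distrib, rotate H, rotate fun a b c => H b c a]
    abel
  have hH0 : ∑ a, ∑ b, ∑ c, H a b c = 0 :=
    nsmul_right_injective three_ne_zero (h3.trans (smul_zero 3).symm)
  rw [← hH0]
  refine sum_congr rfl fun a _ => ?_
  rw [sum_erase_sum_erase_eq_sum_ite]

theorem sum_erase_zero_sum_erase_eq_sub_left {G : Type*} [AddCommGroup G] [Fintype G]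
    [DecidableEq G] (k : G) (f : G → G → R) :
    ∑ l ∈ univ.erase 0, ∑ l' ∈ (univ.erase 0).erase l, f l l'
      = ∑ b ∈ univ.erase k, ∑ c ∈ (univ.erase k).erase b, f (k - b) (k - c) := by
  rw [sum_erase_sum_erase_eq_sum_ite, sum_erase_sum_erase_eq_sum_ite,
    ← (Equiv.subLeft k).sum_comp]
  refine sum_congr rfl fun b _ => ?_
  rw [← (Equiv.subLeft k).sum_comp]
  simp [sub_eq_zero, eq_comm]

end CyclicSums

section PartialDerivative

variable {K M : ℕ} (u : ZMod K × ZMod M → ℝ) (k : ZMod K) (j : ZMod M)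

theorem pd_eq_of_update_eq_affine {f : (ZMod K × ZMod M → ℝ) → ℝ} {a : ℝ}
    (h : ∀ t, f (update u (k, j) t) = a * t + f (update u (k, j) 0)) : pd K M k j f u = a := by
  rw [pd, funext h]
  simp

variable {u k j}

theorem wTerm_sub_wTerm_update (hM : (1 : ZMod M) ≠ 0) (t : ℝ) :
    wTerm K M k j (update u (k, j) t) - wTerm K M k (j - 1) (update u (k, j) t)
      = (u (k, j + 1) - u (k, j - 1)) / 3 * t + (u (k, j + 1) ^ 2 - u (k, j - 1) ^ 2) / 3 := by
  simp [wTerm, hM]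
  ring

theorem bTerm_sub_bTerm_update (hM : (1 : ZMod M) ≠ 0) {l : ZMod K} (hl : l ≠ 0) (t : ℝ) :
    bTerm K M k j l (update u (k, j) t) - bTerm K M k (j - 1) l (update u (k, j) t)
      = (u (k, j + 1) * u (k + l, j + 1) - u (k, j - 1) * u (k + l, j - 1)) / 2 := by
  simp [bTerm, hM, hl]
  ring

theorem rTerm_update {l : ZMod K} (hl : l ≠ 0) (j' : ZMod M) (t : ℝ) :
    rTerm K M k j' l (update u (k, j) t) = rTerm K M k j' l u := by
  simp [rTerm, hl]

theorem pTerm_update {l l' : ZMod K} (hl : l ≠ 0) (hl' : l' ≠ 0) (j' : ZMod M) (t : ℝ) :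
    pTerm K M k j' l l' (update u (k, j) t) = pTerm K M k j' l l' u := by
  simp [pTerm, hl, hl']

end PartialDerivative

section DerivativeOfB

variable {K M : ℕ} [NeZero K] (α : ZMod K → ℝ) (β γ : ZMod K → ZMod K → ℝ)
  (lam : ZMod K → ZMod K → ZMod K → ℝ) (k : ZMod K) (j : ZMod M) (u : ZMod K × ZMod M → ℝ)

theorem BTerm_eq :
    BTerm K M α β γ lam k j u
      = α k * (wTerm K M k j u - wTerm K M k (j - 1) u)
        + ∑ l ∈ univ.erase 0, β k l * (bTerm K M k j l u - bTerm K M k (j - 1) l u)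
        + ∑ l ∈ univ.erase 0, γ k l * (rTerm K M k j l u - rTerm K M k (j - 1) l u)
        + ∑ l ∈ univ.erase 0, ∑ l' ∈ (univ.erase 0).erase l,
            lam k (k - l) (k - l') * (pTerm K M k j l l' u - pTerm K M k (j - 1) l l' u) := by
  simp only [BTerm, GTerm, mul_sub, sum_sub_distrib]
  ring

theorem BTerm_update_eq_affine (t : ℝ) :
    BTerm K M α β γ lam k j (update u (k, j) t)
      = α k * (u (k, j + 1) - u (k, j - 1)) / 3 * t
        + BTerm K M α β γ lam k j (update u (k, j) 0) := by
  by_cases hM : (1 : ZMod M) = 0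
  · -- `M = 1`: then `j - 1 = j`, so `B` vanishes identically
    simp [BTerm, hM]
  rw [BTerm_eq, BTerm_eq, ← add_assoc, ← add_assoc, ← add_assoc]
  refine congrArg₂ (· + ·) (congrArg₂ (· + ·) (congrArg₂ (· + ·) ?_ ?_) ?_) ?_
  · rw [wTerm_sub_wTerm_update hM, wTerm_sub_wTerm_update hM]
    ring
  · refine sum_congr rfl fun l hl => ?_
    rw [bTerm_sub_bTerm_update hM (ne_of_mem_erase hl),
      bTerm_sub_bTerm_update hM (ne_of_mem_erase hl)]
  · refine sum_congr rfl fun l hl => ?_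
    simp only [rTerm_update (ne_of_mem_erase hl)]
  · refine sum_congr rfl fun l hl => sum_congr rfl fun l' hl' => ?_
    simp only [pTerm_update (ne_of_mem_erase hl) (ne_of_mem_erase (mem_of_mem_erase hl'))]

theorem pd_BTerm :
    pd K M k j (BTerm K M α β γ lam k j) u = α k * (u (k, j + 1) - u (k, j - 1)) / 3 :=
  pd_eq_of_update_eq_affine u k j (BTerm_update_eq_affine α β γ lam k j u)

theorem sum_pd_BTerm_eq_zero [NeZero M] :
    ∑ j : ZMod M, pd K M k j (BTerm K M α β γ lam k j) u = 0 := by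
  have hshift : ∑ j : ZMod M, (u (k, j + 1) - u (k, j - 1)) = 0 := by
    rw [sum_sub_distrib, sub_eq_zero]
    exact Fintype.sum_equiv (Equiv.addRight 2) _ _ fun j => by
      simp only [Equiv.coe_addRight]; ring_nf
  simp only [pd_BTerm, ← sum_div, ← mul_sum, hshift, mul_zero, zero_div]

end DerivativeOfB

section SummationByParts

variable {K M : ℕ} [NeZero M] (u : ZMod K × ZMod M → ℝ)

theorem sum_sub_mul_wTerm_eq_zero (k : ZMod K) :
    ∑ j : ZMod M, (u (k, j) - u (k, j + 1)) * wTerm K M k j u = 0 :=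
  (sum_eq_of_eq_add_sub_comp_add (g := 0) (h := fun j => u (k, j) ^ 3 / 3) 1 fun j => by
    simp only [wTerm, Pi.zero_apply]; ring).trans sum_const_zero

theorem sum_sub_mul_bTerm (k l : ZMod K) :
    ∑ j : ZMod M, (u (k, j) - u (k, j + 1)) * bTerm K M k j l u
      = -(∑ j : ZMod M, (u (k + l, j) - u (k + l, j + 1)) * rTerm K M (k + l) j l u) / 2 := by
  rw [neg_div, sum_div, ← sum_neg_distrib]
  exact sum_eq_of_eq_add_sub_comp_add (h := fun j => u (k, j) ^ 2 * u (k + l, j) / 2) 1 fun j => by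
    simp only [bTerm, rTerm, add_sub_cancel_right]; ring

theorem sum_sub_mul_pTerm_cyclic (a b c : ZMod K) :
    ∑ j : ZMod M, (u (a, j) - u (a, j + 1)) * pTerm K M a j (a - b) (a - c) u
      + ∑ j : ZMod M, (u (b, j) - u (b, j + 1)) * pTerm K M b j (b - c) (b - a) u
      + ∑ j : ZMod M, (u (c, j) - u (c, j + 1)) * pTerm K M c j (c - a) (c - b) u = 0 := by
  rw [← sum_add_distrib, ← sum_add_distrib]
  exact (sum_eq_of_eq_add_sub_comp_add (g := 0) (h := fun j => u (a, j) * u (b, j) * u (c, j)) 1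
    fun j => by simp only [pTerm, sub_sub_cancel, Pi.zero_apply]; ring).trans sum_const_zero

theorem sum_sum_sub_mul_bTerm_add_rTerm_eq_zero [NeZero K] (β γ : ZMod K → ZMod K → ℝ)
    (hβγ : ∀ k a : ZMod K, β k a = 2 * γ (k + a) a) (l : ZMod K) :
    ∑ k : ZMod K, ∑ j : ZMod M, (u (k, j) - u (k, j + 1))
      * (β k l * bTerm K M k j l u + γ k l * rTerm K M k j l u) = 0 := by
  let ρ k := γ k l * ∑ j : ZMod M, (u (k, j) - u (k, j + 1)) * rTerm K M k j l u
  refine (sum_congr rfl fun k _ => ?_).trans (sum_sub_comp_add_eq_zero ρ l)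
  simp only [ρ, mul_add, sum_add_distrib, mul_left_comm _ (β k l), mul_left_comm _ (γ k l),
    ← mul_sum]
  rw [sum_sub_mul_bTerm, hβγ]
  ring

theorem sum_sum_sub_mul_pTerm_eq_zero [NeZero K] (lam : ZMod K → ZMod K → ZMod K → ℝ)
    (hlam₁ : ∀ k a a' : ZMod K, lam k (k - a) (k - a') = lam k (k - a') (k - a))
    (hlam₂ : ∀ k a a' : ZMod K, lam k (k - a) (k - a') = lam (k - a) k (k - a')) :
    ∑ k : ZMod K, ∑ j : ZMod M, (u (k, j) - u (k, j + 1))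
      * ∑ l ∈ univ.erase 0, ∑ l' ∈ (univ.erase 0).erase l,
          lam k (k - l) (k - l') * pTerm K M k j l l' u = 0 := by
  have swap₁₂ (a b c : ZMod K) : lam a b c = lam b a c := by simpa using hlam₂ a (a - b) (a - c)
  have swap₂₃ (a b c : ZMod K) : lam a b c = lam a c b := by simpa using hlam₁ a (a - b) (a - c)
  have reindex (k : ZMod K) :
      ∑ j : ZMod M, (u (k, j) - u (k, j + 1)) * ∑ l ∈ univ.erase 0, ∑ l' ∈ (univ.erase 0).erase l,
          lam k (k - l) (k - l') * pTerm K M k j l l' u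
        = ∑ b ∈ univ.erase k, ∑ c ∈ (univ.erase k).erase b,
            lam k b c
              * ∑ j : ZMod M, (u (k, j) - u (k, j + 1)) * pTerm K M k j (k - b) (k - c) u := by
    simp only [mul_sum, mul_left_comm _ (lam _ _ _)]
    rw [sum_comm, sum_congr rfl fun l _ => sum_comm, sum_erase_zero_sum_erase_eq_sub_left k]
    simp only [sub_sub_cancel]
  rw [sum_congr rfl fun k _ => reindex k]
  refine sum_sum_erase_sum_erase_eq_zero _ fun a b c _ _ _ => ?_
  rw [(swap₂₃ b c a).trans (swap₁₂ a b c).symm, (swap₁₂ c a b).trans (swap₂₃ a b c).symm,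
    ← mul_add, ← mul_add, sum_sub_mul_pTerm_cyclic, mul_zero]

end SummationByParts

theorem sum_sum_mul_BTerm_eq_zero {K M : ℕ} [NeZero K] [NeZero M] (α : ZMod K → ℝ)
    (β γ : ZMod K → ZMod K → ℝ) (lam : ZMod K → ZMod K → ZMod K → ℝ)
    (hβγ : ∀ k a : ZMod K, β k a = 2 * γ (k + a) a)
    (hlam₁ : ∀ k a a' : ZMod K, lam k (k - a) (k - a') = lam k (k - a') (k - a))
    (hlam₂ : ∀ k a a' : ZMod K, lam k (k - a) (k - a') = lam (k - a) k (k - a'))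
    (u : ZMod K × ZMod M → ℝ) :
    ∑ k : ZMod K, ∑ j : ZMod M, u (k, j) * BTerm K M α β γ lam k j u = 0 := by
  have byParts (k : ZMod K) :
      ∑ j : ZMod M, u (k, j) * BTerm K M α β γ lam k j u
        = ∑ j : ZMod M, (u (k, j) - u (k, j + 1)) * GTerm K M α β γ lam k j u :=
    sum_mul_sub_comp_sub (fun j => u (k, j)) (fun j => GTerm K M α β γ lam k j u) 1
  have hBR : ∑ k : ZMod K, ∑ j : ZMod M, (u (k, j) - u (k, j + 1))
        * ∑ l ∈ univ.erase 0, β k l * bTerm K M k j l u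
      + ∑ k : ZMod K, ∑ j : ZMod M, (u (k, j) - u (k, j + 1))
        * ∑ l ∈ univ.erase 0, γ k l * rTerm K M k j l u = 0 := by
    simp only [← sum_add_distrib, ← mul_add, mul_sum]
    rw [sum_congr rfl fun k _ => sum_comm, sum_comm]
    exact sum_eq_zero fun l _ => sum_sum_sub_mul_bTerm_add_rTerm_eq_zero u β γ hβγ l
  simp only [byParts, GTerm, mul_add, sum_add_distrib, mul_left_comm _ (α _), ← mul_sum,
    sum_sub_mul_wTerm_eq_zero, mul_zero, zero_add, hBR,
    sum_sum_sub_mul_pTerm_eq_zero u lam hlam₁ hlam₂]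

/-- Under the conditions `β_k^a = 2γ_{k+a}^a` and the symmetry of `λ`,
`∑_{k∈ℤ_K}∑_{j∈ℤ_M} (u_{k,j} B_{k,j}(u) − ∂_{k,j}B_{k,j}(u)) = 0`. -/
theorem sum_uB_minus_partialB_eq_zero (K M : ℕ) [NeZero K] [NeZero M]
    (α : ZMod K → ℝ) (β γ : ZMod K → ZMod K → ℝ)
    (lam : ZMod K → ZMod K → ZMod K → ℝ)
    (hβγ : ∀ k a : ZMod K, β k a = 2 * γ (k + a) a)
    (hlam₁ : ∀ k a a' : ZMod K, lam k (k - a) (k - a') = lam k (k - a') (k - a))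
    (hlam₂ : ∀ k a a' : ZMod K, lam k (k - a) (k - a') = lam (k - a) k (k - a'))
    (u : (ZMod K × ZMod M) → ℝ) :
    ∑ k : ZMod K, ∑ j : ZMod M,
        (u (k, j) * BTerm K M α β γ lam k j u
          - pd K M k j (BTerm K M α β γ lam k j) u) = 0 := by
  simp only [sum_sub_distrib, sum_pd_BTerm_eq_zero, sub_zero]
  exact sum_sum_mul_BTerm_eq_zero α β γ lam hβγ hlam₁ hlam₂ u
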